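/- Let k_on, k_off : [0,∞) → ℝ be C¹, let k_c, k_f : [0,∞)×[0,∞) → ℝ be continuous and symmetric, and set T(V,x) = V·k_on(x) − k_off(x). Let T₀ > 0, V ∈ C¹([0,T₀]), and u ∈ C¹([0,∞)×[0,T₀]) such that there exists M > 0 with u(x,t) = 0 for all x ≥ M and all t ∈ [0,T₀]. Assume that for all t ∈ (0,T₀): V'(t) = −∫_0^∞ T(V(t),x) u(x,t) dx, and for all x > 0, ∂_t u(x,t) = −∂_x( T(V(t),x) u(x,t) ) + Q_c(u(·,t))(x) − Q_f(u(·,t))(x). Then the total mass P(t) = V(t) + ∫_0^∞ x u(x,t) dx is constant on [0,T₀]. -/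

import Mathlib

open MeasureTheory

/-- The coagulation operator:
`Q_c(u)(x) = (1/2)∫_0^x k_c(y, x−y) u(y) u(x−y) dy − u(x) ∫_0^∞ k_c(x,y) u(y) dy`. -/
noncomputable def Qc (kc : ℝ → ℝ → ℝ) (u : ℝ → ℝ) (x : ℝ) : ℝ :=
  (1 / 2) * (∫ y in (0:ℝ)..x, kc y (x - y) * u y * u (x - y))
    - u x * ∫ y in Set.Ioi (0:ℝ), kc x y * u y

/-- The fragmentation operator:
`Q_f(u)(x) = (1/2) u(x) ∫_0^x k_f(y, x−y) dy − ∫_0^∞ k_f(x,y) u(x+y) dy`. -/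
noncomputable def Qf (kf : ℝ → ℝ → ℝ) (u : ℝ → ℝ) (x : ℝ) : ℝ :=
  (1 / 2) * u x * (∫ y in (0:ℝ)..x, kf y (x - y))
    - ∫ y in Set.Ioi (0:ℝ), kf x y * u (x + y)

/-- The polymerization transport rate `T(V,x) = V·k_on(x) − k_off(x)`. -/
noncomputable def Trate (kon koff : ℝ → ℝ) (V x : ℝ) : ℝ := V * kon x - koff x

/-!
Fix `M` such that every `u(·, t)` vanishes on `[M, ∞)`. Multiplying the equation by `x` and
integrating over `[0, M]`, the transport term integrates by parts to `-∫ T(V, x) u dx`, which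
cancels `V'`. Coagulation and fragmentation conserve mass: for `A` far enough beyond the support,
`x Q(u)(x)` equals `∫₀ˣ F(y, x - y) dy - ∫₀^{A-x} F(x, z) dz` for a suitable `F` (the gain term is
rewritten with the symmetry `y ↔ x - y` of the kernel), and this integrates to zero over `[0, A]`
since `(x, y) ↦ (y, x - y)` maps the triangle `0 ≤ y ≤ x ≤ A` onto `y, z ≥ 0, y + z ≤ A`.
So `P' = 0` on `(0, T₀)`, and `P` is continuous on `[0, T₀]`.
-/

open Set Function Topology intervalIntegral

theorem integral_eq_of_eq_zero_on_Ioc {f : ℝ → ℝ} {a b c : ℝ} (hab : a ≤ b) (hbc : b ≤ c)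
    (hf : ∀ x ∈ Ioc b c, f x = 0) : ∫ x in a..c, f x = ∫ x in a..b, f x := by
  rw [integral_of_le (hab.trans hbc), integral_of_le hab]
  refine setIntegral_eq_of_subset_of_forall_sdiff_eq_zero measurableSet_Ioc
    (Ioc_subset_Ioc_right hbc) fun x hx => hf x ⟨?_, hx.1.2⟩
  exact not_le.1 fun hxb => hx.2 ⟨hx.1.1, hxb⟩

theorem integral_Ioi_eq_of_eq_zero_on_Ioi {f : ℝ → ℝ} {a b : ℝ} (hab : a ≤ b)
    (hf : ∀ x > b, f x = 0) : ∫ x in Ioi a, f x = ∫ x in a..b, f x := by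
  rw [integral_of_le hab]
  refine setIntegral_eq_of_subset_of_forall_sdiff_eq_zero measurableSet_Ioi
    Ioc_subset_Ioi_self fun x hx => hf x ?_
  exact not_le.1 fun hxb => hx.2 ⟨hx.1, hxb⟩

theorem integral_integral_triangle_swap {f : ℝ → ℝ → ℝ} {A : ℝ} (hA : 0 ≤ A)
    (hf : ContinuousOn (uncurry f) {p | 0 ≤ p.2 ∧ p.2 ≤ p.1 ∧ p.1 ≤ A}) :
    ∫ x in 0..A, ∫ y in 0..x, f x y = ∫ y in 0..A, ∫ x in y..A, f x y := by
  set T : Set (ℝ × ℝ) := {p | 0 ≤ p.2 ∧ p.2 ≤ p.1 ∧ p.1 ≤ A}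
  have hT : IsCompact T := by
    refine (isCompact_Icc.prod isCompact_Icc : IsCompact (Icc 0 A ×ˢ Icc (0 : ℝ) A))
      |>.of_isClosed_subset ((isClosed_le continuous_const continuous_snd).inter
        ((isClosed_le continuous_snd continuous_fst).inter
          (isClosed_le continuous_fst continuous_const))) ?_
    rintro ⟨x, y⟩ ⟨h0y, hyx, hxA⟩
    exact ⟨⟨h0y.trans hyx, hxA⟩, h0y, hyx.trans hxA⟩
  have hint : Integrable (uncurry fun x y => T.indicator (uncurry f) (x, y)) (volume.prod volume) :=
    (integrable_indicator_iff hT.measurableSet).2 (hf.integrableOn_compact hT)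
  have hIcc : ∀ {a b : ℝ} {g : ℝ → ℝ}, a ≤ b → ∫ x in a..b, g x = ∫ x, (Icc a b).indicator g x :=
    fun hab => by
      rw [MeasureTheory.integral_indicator measurableSet_Icc, integral_Icc_eq_integral_Ioc,
        integral_of_le hab]
  convert integral_integral_swap hint using 1 <;> rw [hIcc hA] <;> congr 1 <;> ext x
  · by_cases hx : x ∈ Icc 0 A
    · have hmem : ∀ y, (x, y) ∈ T ↔ y ∈ Icc 0 x := fun y => by simp [T, hx.2]
      simp only [indicator_of_mem hx, hIcc hx.1, indicator_apply, hmem, uncurry]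
    · have hmem : ∀ y, (x, y) ∉ T := fun y hy => hx ⟨hy.1.trans hy.2.1, hy.2.2⟩
      simp [indicator_of_notMem hx, indicator_of_notMem (hmem _)]
  · by_cases hx : x ∈ Icc 0 A
    · have hmem : ∀ y, (y, x) ∈ T ↔ y ∈ Icc x A := fun y => by simp [T, hx.1]
      simp only [indicator_of_mem hx, hIcc hx.2, indicator_apply, hmem, uncurry]
    · have hmem : ∀ y, (y, x) ∉ T := fun y hy => hx ⟨hy.1, hy.2.1.trans hy.2.2⟩
      simp [indicator_of_notMem hx, indicator_of_notMem (hmem _)]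

theorem integral_integral_shear {F : ℝ → ℝ → ℝ} {A : ℝ} (hA : 0 ≤ A)
    (hF : ContinuousOn (uncurry F) (Ici 0 ×ˢ Ici 0)) :
    ∫ x in 0..A, ∫ y in 0..x, F y (x - y) = ∫ y in 0..A, ∫ z in 0..A - y, F y z := by
  rw [integral_integral_triangle_swap (f := fun x y => F y (x - y)) hA
    (hF.comp (f := fun p : ℝ × ℝ => (p.2, p.1 - p.2)) (by fun_prop)
      fun p hp => ⟨hp.1, sub_nonneg.2 hp.2.1⟩)]
  congr 1; ext y
  simp [integral_comp_sub_right (F y) y]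

theorem exists_continuous_eqOn_quadrant {F : ℝ → ℝ → ℝ}
    (hF : ContinuousOn (uncurry F) (Ici 0 ×ˢ Ici 0)) :
    ∃ G : ℝ → ℝ → ℝ, Continuous (uncurry G) ∧ EqOn (uncurry F) (uncurry G) (Ici 0 ×ˢ Ici 0) :=
  ⟨fun y z => F (max y 0) (max z 0),
    hF.comp_continuous (f := fun p : ℝ × ℝ => (max p.1 0, max p.2 0)) (by fun_prop)
      fun p => mk_mem_prod (le_max_right p.1 0) (le_max_right p.2 0),
    fun p hp => by simp [uncurry, max_eq_left (mem_Ici.1 hp.1), max_eq_left (mem_Ici.1 hp.2)]⟩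

noncomputable def shearBalance (F : ℝ → ℝ → ℝ) (A x : ℝ) : ℝ :=
  (∫ y in 0..x, F y (x - y)) - ∫ z in 0..A - x, F x z

theorem shearBalance_congr {F G : ℝ → ℝ → ℝ} {A : ℝ}
    (hFG : EqOn (uncurry F) (uncurry G) (Ici 0 ×ˢ Ici 0)) :
    EqOn (shearBalance F A) (shearBalance G A) (Icc 0 A) := by
  intro x hx
  have hx' : 0 ≤ A - x := sub_nonneg.2 hx.2
  unfold shearBalance
  congr 1 <;> refine integral_congr fun y hy => ?_
  · rw [uIcc_of_le hx.1] at hy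
    exact hFG (mk_mem_prod hy.1 (sub_nonneg.2 hy.2))
  · rw [uIcc_of_le hx'] at hy
    exact hFG (mk_mem_prod hx.1 hy.1)

theorem continuousOn_shearBalance {F : ℝ → ℝ → ℝ} {A : ℝ}
    (hF : ContinuousOn (uncurry F) (Ici 0 ×ˢ Ici 0)) :
    ContinuousOn (shearBalance F A) (Icc 0 A) := by
  obtain ⟨G, hG, hFG⟩ := exists_continuous_eqOn_quadrant hF
  have : Continuous (shearBalance G A) := by unfold shearBalance; fun_prop
  exact this.continuousOn.congr (shearBalance_congr hFG)

theorem integral_shearBalance {F : ℝ → ℝ → ℝ} {A : ℝ} (hA : 0 ≤ A)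
    (hF : ContinuousOn (uncurry F) (Ici 0 ×ˢ Ici 0)) :
    ∫ x in 0..A, shearBalance F A x = 0 := by
  obtain ⟨G, hG, hFG⟩ := exists_continuous_eqOn_quadrant hF
  rw [integral_congr ((shearBalance_congr hFG).mono (uIcc_of_le hA).subset)]
  unfold shearBalance
  rw [intervalIntegral.integral_sub ((by fun_prop : Continuous _).intervalIntegrable _ _)
    ((by fun_prop : Continuous _).intervalIntegrable _ _),
    integral_integral_shear hA hG.continuousOn, sub_self]

theorem integral_mul_apply_sub_of_symm {k : ℝ → ℝ → ℝ} {x : ℝ} (hx : 0 ≤ x)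
    (hk : ContinuousOn (uncurry k) (Ici 0 ×ˢ Ici 0)) (hsymm : ∀ y ≥ 0, ∀ z ≥ 0, k y z = k z y) :
    ∫ y in 0..x, y * k y (x - y) = x / 2 * ∫ y in 0..x, k y (x - y) := by
  have hcont : ContinuousOn (fun y => k y (x - y)) (uIcc 0 x) := by
    rw [uIcc_of_le hx]
    exact hk.comp (by fun_prop) fun y hy => mk_mem_prod hy.1 (sub_nonneg.2 hy.2)
  have hreflect : ∫ y in 0..x, y * k y (x - y) = ∫ y in 0..x, (x - y) * k y (x - y) := by
    have := integral_comp_sub_left (a := 0) (b := x) (fun y => y * k y (x - y)) x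
    simp only [sub_self, sub_zero, sub_sub_cancel] at this
    rw [← this]
    refine integral_congr fun y hy => ?_
    rw [uIcc_of_le hx] at hy
    simp only [hsymm (x - y) (sub_nonneg.2 hy.2) y hy.1]
  have hsplit : ∫ y in 0..x, (x - y) * k y (x - y)
      = x * (∫ y in 0..x, k y (x - y)) - ∫ y in 0..x, y * k y (x - y) := by
    have h₁ : ContinuousOn (fun y => x * k y (x - y)) (uIcc 0 x) := continuousOn_const.mul hcont
    have h₂ : ContinuousOn (fun y => y * k y (x - y)) (uIcc 0 x) := continuousOn_id.mul hcont
    rw [← intervalIntegral.integral_const_mul,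
      ← intervalIntegral.integral_sub h₁.intervalIntegrable h₂.intervalIntegrable]
    simp only [sub_mul]
  linarith

theorem continuousOn_kernel_mul_mul {k : ℝ → ℝ → ℝ} {c : ℝ → ℝ}
    (hk : ContinuousOn (uncurry k) (Ici 0 ×ˢ Ici 0)) (hc : ContinuousOn c (Ici 0)) :
    ContinuousOn (uncurry fun y z => k y z * c y * c z) (Ici 0 ×ˢ Ici 0) :=
  (hk.mul (hc.comp continuousOn_fst fun _ hp => hp.1)).mul
    (hc.comp continuousOn_snd fun _ hp => hp.2)

theorem continuousOn_kernel_mul_add {k : ℝ → ℝ → ℝ} {c : ℝ → ℝ}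
    (hk : ContinuousOn (uncurry k) (Ici 0 ×ˢ Ici 0)) (hc : ContinuousOn c (Ici 0)) :
    ContinuousOn (uncurry fun y z => k y z * c (y + z)) (Ici 0 ×ˢ Ici 0) :=
  hk.mul (hc.comp (continuousOn_fst.add continuousOn_snd) fun _ hp =>
    mem_Ici.2 (add_nonneg hp.1 hp.2))

theorem mul_Qc_eq_shearBalance {k : ℝ → ℝ → ℝ} {c : ℝ → ℝ} {M A x : ℝ}
    (hk : ContinuousOn (uncurry k) (Ici 0 ×ˢ Ici 0)) (hsymm : ∀ y ≥ 0, ∀ z ≥ 0, k y z = k z y)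
    (hc : ContinuousOn c (Ici 0)) (hcM : ∀ y ≥ M, c y = 0) (hMA : 2 * M ≤ A) (hx : x ∈ Icc 0 A) :
    x * Qc k c x = shearBalance (fun y z => y * (k y z * c y * c z)) A x := by
  have hgain := integral_mul_apply_sub_of_symm (k := fun y z => k y z * c y * c z) hx.1
    (continuousOn_kernel_mul_mul hk hc)
    fun y hy z hz => by simp only [hsymm y hy z hz]; ring
  have hloss : x * (c x * ∫ z in Ioi 0, k x z * c z)
      = ∫ z in 0..A - x, x * (k x z * c x * c z) := by
    rcases lt_or_ge x M with hxM | hxM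
    · rw [integral_Ioi_eq_of_eq_zero_on_Ioi (b := A - x) (sub_nonneg.2 hx.2) fun z hz => by
        rw [hcM z (by linarith), mul_zero], ← intervalIntegral.integral_const_mul,
        ← intervalIntegral.integral_const_mul]
      congr 1; ext z; ring
    · simp [hcM x hxM]
  rw [shearBalance, ← hloss, hgain, Qc]
  ring

theorem intervalIntegrable_mul_Qc {k : ℝ → ℝ → ℝ} {c : ℝ → ℝ} {M A : ℝ}
    (hk : ContinuousOn (uncurry k) (Ici 0 ×ˢ Ici 0)) (hsymm : ∀ y ≥ 0, ∀ z ≥ 0, k y z = k z y)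
    (hc : ContinuousOn c (Ici 0)) (hcM : ∀ y ≥ M, c y = 0) (hM : 0 ≤ M) (hMA : 2 * M ≤ A) :
    IntervalIntegrable (fun x => x * Qc k c x) volume 0 A :=
  ((continuousOn_shearBalance (F := fun y z => y * (k y z * c y * c z))
    (continuousOn_fst.mul (continuousOn_kernel_mul_mul hk hc))).congr
    fun _ hx => mul_Qc_eq_shearBalance hk hsymm hc hcM hMA hx).intervalIntegrable_of_Icc
    (by linarith)

theorem integral_mul_Qc_eq_zero {k : ℝ → ℝ → ℝ} {c : ℝ → ℝ} {M A : ℝ}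
    (hk : ContinuousOn (uncurry k) (Ici 0 ×ˢ Ici 0)) (hsymm : ∀ y ≥ 0, ∀ z ≥ 0, k y z = k z y)
    (hc : ContinuousOn c (Ici 0)) (hcM : ∀ y ≥ M, c y = 0) (hM : 0 ≤ M) (hMA : 2 * M ≤ A) :
    ∫ x in 0..A, x * Qc k c x = 0 := by
  have hA : 0 ≤ A := by linarith
  rw [integral_congr fun x hx => mul_Qc_eq_shearBalance hk hsymm hc hcM hMA
    ((uIcc_of_le hA).subset hx)]
  exact integral_shearBalance hA (continuousOn_fst.mul (continuousOn_kernel_mul_mul hk hc))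

theorem mul_Qf_eq_shearBalance {k : ℝ → ℝ → ℝ} {c : ℝ → ℝ} {M A x : ℝ}
    (hk : ContinuousOn (uncurry k) (Ici 0 ×ˢ Ici 0)) (hsymm : ∀ y ≥ 0, ∀ z ≥ 0, k y z = k z y)
    (hcM : ∀ y ≥ M, c y = 0) (hMA : M ≤ A) (hx : x ∈ Icc 0 A) :
    x * Qf k c x = shearBalance (fun y z => y * (k y z * c (y + z))) A x := by
  have hgain : x * (1 / 2 * c x * ∫ y in 0..x, k y (x - y))
      = ∫ y in 0..x, y * (k y (x - y) * c (y + (x - y))) := by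
    simp only [add_sub_cancel, ← mul_assoc, intervalIntegral.integral_mul_const,
      integral_mul_apply_sub_of_symm hx.1 hk hsymm]
    ring
  have hloss : x * ∫ z in Ioi 0, k x z * c (x + z) = ∫ z in 0..A - x, x * (k x z * c (x + z)) := by
    rw [integral_Ioi_eq_of_eq_zero_on_Ioi (sub_nonneg.2 hx.2) fun z hz => by
      rw [hcM (x + z) (by linarith), mul_zero], ← intervalIntegral.integral_const_mul]
  rw [shearBalance, ← hloss, ← hgain, Qf]
  ring

theorem intervalIntegrable_mul_Qf {k : ℝ → ℝ → ℝ} {c : ℝ → ℝ} {M A : ℝ}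
    (hk : ContinuousOn (uncurry k) (Ici 0 ×ˢ Ici 0)) (hsymm : ∀ y ≥ 0, ∀ z ≥ 0, k y z = k z y)
    (hc : ContinuousOn c (Ici 0)) (hcM : ∀ y ≥ M, c y = 0) (hM : 0 ≤ M) (hMA : M ≤ A) :
    IntervalIntegrable (fun x => x * Qf k c x) volume 0 A :=
  ((continuousOn_shearBalance (F := fun y z => y * (k y z * c (y + z)))
    (continuousOn_fst.mul (continuousOn_kernel_mul_add hk hc))).congr
    fun _ hx => mul_Qf_eq_shearBalance hk hsymm hcM hMA hx).intervalIntegrable_of_Icc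
    (hM.trans hMA)

theorem integral_mul_Qf_eq_zero {k : ℝ → ℝ → ℝ} {c : ℝ → ℝ} {M A : ℝ}
    (hk : ContinuousOn (uncurry k) (Ici 0 ×ˢ Ici 0)) (hsymm : ∀ y ≥ 0, ∀ z ≥ 0, k y z = k z y)
    (hc : ContinuousOn c (Ici 0)) (hcM : ∀ y ≥ M, c y = 0) (hM : 0 ≤ M) (hMA : M ≤ A) :
    ∫ x in 0..A, x * Qf k c x = 0 := by
  have hA : 0 ≤ A := hM.trans hMA
  rw [integral_congr fun x hx => mul_Qf_eq_shearBalance hk hsymm hcM hMA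
    ((uIcc_of_le hA).subset hx)]
  exact integral_shearBalance hA (continuousOn_fst.mul (continuousOn_kernel_mul_add hk hc))

theorem Qf_eq_zero_of_le {k : ℝ → ℝ → ℝ} {c : ℝ → ℝ} {M x : ℝ} (hcM : ∀ y ≥ M, c y = 0)
    (hx : M ≤ x) : Qf k c x = 0 := by
  rw [Qf, hcM x hx, setIntegral_eq_zero_of_forall_eq_zero fun y hy => by
    rw [hcM (x + y) (by linarith [mem_Ioi.1 hy]), mul_zero]]
  ring

theorem Qc_eq_zero_of_hasDerivAt {kc kf : ℝ → ℝ → ℝ} {c f g : ℝ → ℝ} {M x t : ℝ}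
    (hcM : ∀ y ≥ M, c y = 0) (hx : M ≤ x) (hf : f =ᶠ[𝓝 t] 0) (hg : g =ᶠ[𝓝 x] 0)
    (hpde : HasDerivAt f (-deriv g x + Qc kc c x - Qf kf c x) t) : Qc kc c x = 0 := by
  have := (hasDerivAt_const t (0 : ℝ)).congr_of_eventuallyEq hf |>.unique hpde
  rwa [hg.deriv_eq, deriv_zero, Pi.zero_apply, Qf_eq_zero_of_le hcM hx, neg_zero, zero_add,
    sub_zero, eq_comm] at this

theorem intervalIntegrable_deriv_of_contDiffOn {g : ℝ → ℝ} {b : ℝ} (hb : 0 ≤ b)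
    (hg : ContDiffOn ℝ 1 g (Ici 0)) : IntervalIntegrable (deriv g) volume 0 b := by
  refine ((hg.continuousOn_derivWithin (uniqueDiffOn_Ici 0) le_rfl).mono
    Icc_subset_Ici_self |>.intervalIntegrable_of_Icc hb).congr fun x hx => ?_
  rw [uIoc_of_le hb] at hx
  exact derivWithin_of_mem_nhds (Ici_mem_nhds hx.1)

theorem integral_mul_deriv_eq {g : ℝ → ℝ} {b : ℝ} (hb : 0 ≤ b) (hg : ContDiffOn ℝ 1 g (Ici 0)) :
    ∫ x in 0..b, x * deriv g x = b * g b - ∫ x in 0..b, g x := by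
  rw [integral_mul_deriv_eq_deriv_mul_of_hasDerivAt (u := fun x => x) (u' := fun _ => 1)
    continuousOn_id (hg.continuousOn.mono (by simp [uIcc_of_le hb, Icc_subset_Ici_self]))
    (fun x _ => hasDerivAt_id x)
    (fun x hx => ((hg.differentiableOn one_ne_zero).differentiableAt
      (Ici_mem_nhds (by simpa [hb] using hx.1))).hasDerivAt)
    intervalIntegrable_const (intervalIntegrable_deriv_of_contDiffOn hb hg)]
  simp

theorem integral_mul_rhs_eq_integral_flux {Tr c : ℝ → ℝ} {kc kf : ℝ → ℝ → ℝ} {M : ℝ} (hM : 0 ≤ M)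
    (hTr : ContDiffOn ℝ 1 Tr (Ici 0)) (hc : ContDiffOn ℝ 1 c (Ici 0)) (hcM : ∀ x ≥ M, c x = 0)
    (hkc : ContinuousOn (uncurry kc) (Ici 0 ×ˢ Ici 0))
    (hkc_symm : ∀ y ≥ 0, ∀ z ≥ 0, kc y z = kc z y)
    (hkf : ContinuousOn (uncurry kf) (Ici 0 ×ˢ Ici 0))
    (hkf_symm : ∀ y ≥ 0, ∀ z ≥ 0, kf y z = kf z y) (hgain : ∀ x > M, Qc kc c x = 0) :
    ∫ x in 0..M, x * (-deriv (fun y => Tr y * c y) x + Qc kc c x - Qf kf c x)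
      = ∫ x in Ioi 0, Tr x * c x := by
  have h2M : M ≤ 2 * M := by linarith
  have hQc := intervalIntegrable_mul_Qc hkc hkc_symm hc.continuousOn hcM hM le_rfl
  have hQf := intervalIntegrable_mul_Qf hkf hkf_symm hc.continuousOn hcM hM h2M
  have hcoll : ∫ x in 0..M, x * (Qc kc c x - Qf kf c x) = 0 := by
    rw [← integral_eq_of_eq_zero_on_Ioc hM h2M fun x hx => by
        rw [hgain x hx.1, Qf_eq_zero_of_le hcM hx.1.le, sub_zero, mul_zero]]
    simp only [mul_sub]
    rw [intervalIntegral.integral_sub hQc hQf,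
      integral_mul_Qc_eq_zero hkc hkc_symm hc.continuousOn hcM hM le_rfl,
      integral_mul_Qf_eq_zero hkf hkf_symm hc.continuousOn hcM hM h2M, sub_zero]
  have htransport : ∫ x in 0..M, x * deriv (fun y => Tr y * c y) x = -∫ x in Ioi 0, Tr x * c x := by
    rw [integral_mul_deriv_eq hM (hTr.mul hc), hcM M le_rfl, mul_zero, mul_zero, zero_sub,
      integral_Ioi_eq_of_eq_zero_on_Ioi hM fun x hx => by rw [hcM x hx.le, mul_zero]]
  have hD : IntervalIntegrable (fun x => x * deriv (fun y => Tr y * c y) x) volume 0 M :=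
    (intervalIntegrable_deriv_of_contDiffOn hM (hTr.mul hc)).continuousOn_mul continuousOn_id
  have hQ : IntervalIntegrable (fun x => x * (Qc kc c x - Qf kf c x)) volume 0 M := by
    simpa only [mul_sub] using (hQc.sub hQf).mono_set (by
      rw [uIcc_of_le hM, uIcc_of_le (hM.trans h2M)]; exact Icc_subset_Icc_right h2M)
  have hexpand : (fun x => x * (-deriv (fun y => Tr y * c y) x + Qc kc c x - Qf kf c x))
      = fun x => x * (Qc kc c x - Qf kf c x) - x * deriv (fun y => Tr y * c y) x := by
    ext x; ring
  rw [hexpand, intervalIntegral.integral_sub hQ hD, htransport, hcoll, zero_sub, neg_neg]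

theorem DifferentiableOn.hasDerivAt_fderivWithin_snd {E : Type*} [NormedAddCommGroup E]
    [NormedSpace ℝ E] {f : ℝ × ℝ → E} {S : Set (ℝ × ℝ)} {x t : ℝ}
    (hf : DifferentiableOn ℝ f S) (hS : S ∈ 𝓝 (x, t)) :
    HasDerivAt (fun s => f (x, s)) (fderivWithin ℝ f S (x, t) (0, 1)) t := by
  rw [fderivWithin_of_mem_nhds hS]
  exact (hf.differentiableAt hS).hasFDerivAt.comp_hasDerivAt t
    ((hasDerivAt_const t x).prodMk (hasDerivAt_id t))

theorem continuousOn_integral_of_continuousOn_prod {f : ℝ → ℝ → ℝ} {a b c d : ℝ}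
    (hab : a ≤ b) (hcd : c ≤ d) (hf : ContinuousOn (uncurry f) (Icc a b ×ˢ Icc c d)) :
    ContinuousOn (fun t => ∫ x in a..b, f x t) (Icc c d) := by
  have hf' : Continuous (uncurry fun t x => f (projIcc a b hab x) (projIcc c d hcd t)) :=
    hf.comp_continuous
      (f := fun p : ℝ × ℝ => ((projIcc a b hab p.2 : ℝ), (projIcc c d hcd p.1 : ℝ)))
      (by fun_prop) fun p : ℝ × ℝ => mk_mem_prod (projIcc a b hab p.2).2 (projIcc c d hcd p.1).2
  refine (continuous_parametric_intervalIntegral_of_continuous' hf' a b).continuousOn.congr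
    fun t ht => integral_congr fun x hx => ?_
  rw [uIcc_of_le hab] at hx
  simp [projIcc_of_mem _ hx, projIcc_of_mem _ ht]

theorem hasDerivAt_integral_of_continuousOn_prod {f g : ℝ → ℝ → ℝ} {a b c d t₀ : ℝ}
    (hab : a ≤ b) (hf : ContinuousOn (uncurry f) (Icc a b ×ˢ Icc c d))
    (hg : ContinuousOn (uncurry g) (Icc a b ×ˢ Icc c d))
    (hfg : ∀ x ∈ Ioc a b, ∀ t ∈ Ioo c d, HasDerivAt (f x) (g x t) t) (ht₀ : t₀ ∈ Ioo c d) :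
    HasDerivAt (fun t => ∫ x in a..b, f x t) (∫ x in a..b, g x t₀) t₀ := by
  obtain ⟨C, hC⟩ := (isCompact_Icc.prod isCompact_Icc).exists_bound_of_continuousOn hg
  have huIoc : uIoc a b = Ioc a b := uIoc_of_le hab
  have hslice : ∀ {h : ℝ → ℝ → ℝ}, ContinuousOn (uncurry h) (Icc a b ×ˢ Icc c d) →
      ∀ t ∈ Ioo c d, ContinuousOn (fun x => h x t) (Icc a b) := fun hh t ht =>
    hh.comp (by fun_prop) fun x hx => mk_mem_prod hx (Ioo_subset_Icc_self ht)
  refine (intervalIntegral.hasDerivAt_integral_of_dominated_loc_of_deriv_le (μ := volume)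
    (F := fun t x => f x t) (F' := fun t x => g x t) (bound := fun _ => C)
    (isOpen_Ioo.mem_nhds ht₀) ?_ ?_ ?_ ?_ intervalIntegrable_const ?_).2
  · filter_upwards [isOpen_Ioo.mem_nhds ht₀] with t ht
    exact ((hslice hf t ht).mono (huIoc ▸ Ioc_subset_Icc_self)).aestronglyMeasurable measurableSet_uIoc
  · exact (hslice hf t₀ ht₀).intervalIntegrable_of_Icc hab
  · exact ((hslice hg t₀ ht₀).mono (huIoc ▸ Ioc_subset_Icc_self)).aestronglyMeasurable
      measurableSet_uIoc
  · exact ae_of_all _ fun x hx t ht =>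
      hC (x, t) (mk_mem_prod (Ioc_subset_Icc_self (huIoc ▸ hx)) (Ioo_subset_Icc_self ht))
  · exact ae_of_all _ fun x hx t ht => hfg x (huIoc ▸ hx) t ht

theorem hasDerivAt_integral_mul_of_contDiffOn {u : ℝ → ℝ → ℝ} {w : ℝ → ℝ} {T₀ M t : ℝ}
    (hT₀ : 0 < T₀) (hM : 0 ≤ M) (hu : ContDiffOn ℝ 1 (uncurry u) (Ici 0 ×ˢ Icc 0 T₀))
    (ht : t ∈ Ioo 0 T₀) (hw : ∀ x ∈ Ioc 0 M, HasDerivAt (u x) (w x) t) :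
    HasDerivAt (fun s => ∫ x in 0..M, x * u x s) (∫ x in 0..M, x * w x) t := by
  set S := Ici (0 : ℝ) ×ˢ Icc 0 T₀
  set uₜ : ℝ → ℝ → ℝ := fun x s => fderivWithin ℝ (uncurry u) S (x, s) (0, 1)
  have hrect : Icc 0 M ×ˢ Icc 0 T₀ ⊆ S := prod_mono Icc_subset_Ici_self subset_rfl
  have huₜ : ∀ x > 0, ∀ s ∈ Ioo 0 T₀, HasDerivAt (u x) (uₜ x s) s := fun x hx s hs =>
    (hu.differentiableOn one_ne_zero).hasDerivAt_fderivWithin_snd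
      (prod_mem_nhds (Ici_mem_nhds hx) (Icc_mem_nhds hs.1 hs.2))
  have hderiv := hasDerivAt_integral_of_continuousOn_prod (f := fun x s => x * u x s)
    (g := fun x s => x * uₜ x s) hM (continuousOn_fst.mul (hu.continuousOn.mono hrect))
    (continuousOn_fst.mul (((hu.continuousOn_fderivWithin
      ((uniqueDiffOn_Ici 0).prod (uniqueDiffOn_Icc hT₀)) le_rfl).clm_apply
        continuousOn_const).mono hrect))
    (fun x hx s hs => (huₜ x hx.1 s hs).const_mul x) ht
  refine hderiv.congr_deriv (integral_congr fun x hx => ?_)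
  -- the weight `x` vanishes at `x = 0`, where no time derivative of `u 0` is assumed
  rcases (uIcc_of_le hM ▸ hx).1.eq_or_lt with rfl | hx₀
  · simp
  · simp only [(huₜ x hx₀ t ht).unique (hw x ⟨hx₀, (uIcc_of_le hM ▸ hx).2⟩)]

theorem eq_of_hasDerivAt_eq_zero {f : ℝ → ℝ} {a b t : ℝ} (hf : ContinuousOn f (Icc a b))
    (hf' : ∀ s ∈ Ioo a b, HasDerivAt f 0 s) (ht : t ∈ Icc a b) : f t = f a := by
  rcases ht.1.eq_or_lt with rfl | hat
  · rfl
  obtain ⟨s, hs, hslope⟩ := exists_hasDerivAt_eq_slope f (fun _ => 0) hat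
    (hf.mono (Icc_subset_Icc_right ht.2)) fun s hs => hf' s ⟨hs.1, hs.2.trans_le ht.2⟩
  rw [eq_comm, div_eq_zero_iff, sub_eq_zero] at hslope
  exact hslope.resolve_right (sub_ne_zero.2 hat.ne')

/-- the total mass `P(t) = V(t) + ∫_0^∞ x u(x,t) dx` is conserved by the
polymerization–coagulation–fragmentation system. -/
theorem total_mass_conservation
    (kon koff : ℝ → ℝ) (kc kf : ℝ → ℝ → ℝ) (T₀ : ℝ) (hT₀ : 0 < T₀)
    (V : ℝ → ℝ) (u : ℝ → ℝ → ℝ)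
    (hkon : ContDiffOn ℝ 1 kon (Set.Ici 0))
    (hkoff : ContDiffOn ℝ 1 koff (Set.Ici 0))
    (hkc_cont : ContinuousOn (fun p : ℝ × ℝ => kc p.1 p.2) (Set.Ici 0 ×ˢ Set.Ici 0))
    (hkc_symm : ∀ x ∈ Set.Ici (0:ℝ), ∀ y ∈ Set.Ici (0:ℝ), kc x y = kc y x)
    (hkf_cont : ContinuousOn (fun p : ℝ × ℝ => kf p.1 p.2) (Set.Ici 0 ×ˢ Set.Ici 0))
    (hkf_symm : ∀ x ∈ Set.Ici (0:ℝ), ∀ y ∈ Set.Ici (0:ℝ), kf x y = kf y x)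
    (hV : ContDiffOn ℝ 1 V (Set.Icc 0 T₀))
    (hu : ContDiffOn ℝ 1 (fun p : ℝ × ℝ => u p.1 p.2) (Set.Ici 0 ×ˢ Set.Icc 0 T₀))
    (hsupp : ∃ M : ℝ, 0 < M ∧ ∀ x ≥ M, ∀ t ∈ Set.Icc (0:ℝ) T₀, u x t = 0)
    (hODE : ∀ t ∈ Set.Ioo (0:ℝ) T₀,
      HasDerivAt V (-∫ x in Set.Ioi (0:ℝ), Trate kon koff (V t) x * u x t) t)
    (hPDE : ∀ t ∈ Set.Ioo (0:ℝ) T₀, ∀ x > (0:ℝ),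
      HasDerivAt (fun s => u x s)
        (-(deriv (fun y => Trate kon koff (V t) y * u y t) x)
          + Qc kc (fun y => u y t) x - Qf kf (fun y => u y t) x) t) :
    ∀ t ∈ Set.Icc (0:ℝ) T₀,
      V t + (∫ x in Set.Ioi (0:ℝ), x * u x t)
        = V 0 + ∫ x in Set.Ioi (0:ℝ), x * u x 0 := by
  obtain ⟨M, hM, hMsupp⟩ := hsupp
  have hu₀ : ∀ t ∈ Ioo 0 T₀, ∀ x ≥ M, u x t = 0 := fun t ht x hx =>
    hMsupp x hx t (Ioo_subset_Icc_self ht)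
  -- Coagulation of clusters smaller than `M` produces clusters up to size `2 M`; the support
  -- hypothesis is compatible with the equation only because this gain vanishes.
  have hgain : ∀ t ∈ Ioo 0 T₀, ∀ x > M, Qc kc (fun y => u y t) x = 0 := fun t ht x hx =>
    Qc_eq_zero_of_hasDerivAt (hu₀ t ht) hx.le
      (Filter.eventually_of_mem (Ioo_mem_nhds ht.1 ht.2) fun s hs => hu₀ s hs x hx.le)
      (Filter.eventually_of_mem (Ioi_mem_nhds hx) fun y hy =>
        show _ * u y t = 0 by rw [hu₀ t ht y (le_of_lt hy), mul_zero])
      (hPDE t ht x (hM.trans hx))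
  have hderiv : ∀ t ∈ Ioo 0 T₀, HasDerivAt (fun t => V t + ∫ x in 0..M, x * u x t) 0 t := by
    intro t ht
    have hbalance := integral_mul_rhs_eq_integral_flux (Tr := Trate kon koff (V t))
      (c := fun y => u y t) hM.le ((contDiffOn_const.mul hkon).sub hkoff)
      (hu.comp (contDiff_id.prodMk contDiff_const).contDiffOn fun x hx =>
        mk_mem_prod hx (Ioo_subset_Icc_self ht))
      (hu₀ t ht) hkc_cont hkc_symm hkf_cont hkf_symm (hgain t ht)
    beta_reduce at hbalance
    refine ((hODE t ht).add (hasDerivAt_integral_mul_of_contDiffOn hT₀ hM.le hu ht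
      fun x hx => hPDE t ht x hx.1)).congr_deriv ?_
    rw [hbalance, neg_add_cancel]
  have hcont : ContinuousOn (fun t => V t + ∫ x in 0..M, x * u x t) (Icc 0 T₀) :=
    hV.continuousOn.add (continuousOn_integral_of_continuousOn_prod hM.le hT₀.le
      (continuousOn_fst.mul (hu.continuousOn.mono (prod_mono Icc_subset_Ici_self subset_rfl))))
  have hmass : ∀ t ∈ Icc 0 T₀, ∫ x in Ioi 0, x * u x t = ∫ x in 0..M, x * u x t := fun t ht =>
    integral_Ioi_eq_of_eq_zero_on_Ioi hM.le fun x hx => by rw [hMsupp x hx.le t ht, mul_zero]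
  intro t ht
  rw [hmass t ht, hmass 0 ⟨le_rfl, hT₀.le⟩]
  exact eq_of_hasDerivAt_eq_zero hcont hderiv ht
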